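/- Let M and M′ be networks whose signal counts r_i and r′_i (from the equilibrium weight recursion) satisfy lim_{i→∞}(r_i/i) > lim_{i→∞}(r′_i/i) > 0, both limits existing. Then for every utility threshold v̄ ∈ (−1/4, 0) there exists π > 0 such that for every σ with 0 < 1/σ² ≤ π: the set {I ∈ ℕ : v_σ(r_i) ≥ v̄ for all i ≥ I} is nonempty with least element I (social learning strongly attains v̄ by agent I in M), the set {i ∈ ℕ : v_σ(r′_i) ≥ v̄} is nonempty with least element i′ (social learning weakly attains v̄ by agent i′ in M′), and I < i′. -/

import Mathlib

open Matrix Finset Filter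

/-- The equilibrium weight vectors of the sequential social-learning model. -/
noncomputable def eqW (Net : ℕ → Finset ℕ) (i : ℕ) : ℕ → ℝ :=
  Nat.strongRecOn i (fun n prev =>
    let nb := (Net n).filter (fun j => j < n)
    if nb.Nonempty then
      let What : Matrix {j // j ∈ nb} (Fin (n - 1)) ℝ :=
        Matrix.of (fun j m => prev j.1 (Finset.mem_filter.mp j.2).2 (m.1 + 1))
      let beta : {j // j ∈ nb} → ℝ :=
        Matrix.vecMul (fun j => ∑ m, What j m) ((What * What.transpose)⁻¹)
      fun m => (if m = n then (1 : ℝ) else 0) +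
        ∑ j : {j // j ∈ nb}, beta j * prev j.1 (Finset.mem_filter.mp j.2).2 m
    else fun m => if m = n then (1 : ℝ) else 0)

/-- The number of signals aggregated by agent `i`: `r_i = Σ_j W_i(j)`. -/
noncomputable def rcount (Net : ℕ → Finset ℕ) (i : ℕ) : ℝ :=
  ∑ j ∈ Finset.range (i + 1), eqW Net i j

open MeasureTheory ProbabilityTheory Real

/-- The expected equilibrium welfare of an agent aggregating `r` signals when the
private signal variance is `σ²`:
`v_σ(r) = −½ ∫ (eˣ/(1+eˣ) − 1)² dN(2r/σ², 4r/σ²)(x) − ½ ∫ (eˣ/(1+eˣ))² dN(−2r/σ², 4r/σ²)(x)`. -/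
noncomputable def welfare (σ r : ℝ) : ℝ :=
  -(1 / 2) * ∫ x, (Real.exp x / (1 + Real.exp x) - 1) ^ 2
      ∂(gaussianReal (2 * r / σ ^ 2) (Real.toNNReal (4 * r / σ ^ 2)))
  - (1 / 2) * ∫ x, (Real.exp x / (1 + Real.exp x)) ^ 2
      ∂(gaussianReal (-(2 * r / σ ^ 2)) (Real.toNNReal (4 * r / σ ^ 2)))

open scoped Topology

/-!
The welfare depends on `r` and `σ` only through `t = r / σ²`. For `t > 0` it equals `-E t`,
where `E t = ∫ e^{-t/2} / (4 cosh (√t z)) dN(0,1)(z)` decreases from `1/4` to `0`; for `t ≤ 0`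
it is at most `-1/4`. So each `v̄ ∈ (-1/4, 0)` has a threshold `τ > 0`: `v_σ(r) ≥ v̄` when
`r > τσ²` and `v_σ(r) < v̄` when `r < τσ²`. As `r_i ≈ L i` and `r'_i ≈ L' i` with `L > L'`,
for a large level `R = τσ²` the sequence `r` exceeds `R` for good from about `R / L` on,
whereas `r'` stays below `R` until about `R / L' > R / L`.
-/

noncomputable def lossDensity (t z : ℝ) : ℝ :=
  exp (-(t / 2)) / (4 * cosh (√t * z)) * gaussianPDFReal 0 1 z

noncomputable def expectedLoss (t : ℝ) : ℝ := ∫ z, lossDensity t z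

lemma lossDensity_nonneg (t z : ℝ) : 0 ≤ lossDensity t z := by
  have := cosh_pos (√t * z)
  have := gaussianPDFReal_nonneg 0 1 z
  unfold lossDensity
  positivity

lemma lossDensity_le (t z : ℝ) :
    lossDensity t z ≤ exp (-(t / 2)) / 4 * gaussianPDFReal 0 1 z := by
  unfold lossDensity
  gcongr
  · exact gaussianPDFReal_nonneg 0 1 z
  · linarith [one_le_cosh (√t * z)]

lemma integrable_lossDensity (t : ℝ) : Integrable (lossDensity t) := by
  refine ((integrable_gaussianPDFReal 0 1).const_mul (exp (-(t / 2)) / 4)).mono'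
    (by unfold lossDensity; fun_prop) (ae_of_all _ fun z => ?_)
  rw [norm_of_nonneg (lossDensity_nonneg t z)]
  exact lossDensity_le t z

lemma expectedLoss_le (t : ℝ) : expectedLoss t ≤ exp (-(t / 2)) / 4 := by
  calc expectedLoss t ≤ ∫ z, exp (-(t / 2)) / 4 * gaussianPDFReal 0 1 z :=
        integral_mono (integrable_lossDensity t)
          ((integrable_gaussianPDFReal 0 1).const_mul _) (lossDensity_le t)
    _ = exp (-(t / 2)) / 4 := by
        rw [integral_const_mul, integral_gaussianPDFReal_eq_one 0 one_ne_zero, mul_one]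

lemma antitoneOn_expectedLoss : AntitoneOn expectedLoss (Set.Ici 0) := by
  intro s hs t _ hst
  refine integral_mono (integrable_lossDensity t) (integrable_lossDensity s) fun z => ?_
  have hcosh : cosh (√s * z) ≤ cosh (√t * z) := by
    rw [cosh_le_cosh, abs_mul, abs_mul, abs_of_nonneg (sqrt_nonneg _),
      abs_of_nonneg (sqrt_nonneg _)]
    gcongr
  unfold lossDensity
  gcongr
  exact gaussianPDFReal_nonneg 0 1 z

lemma le_expectedLoss {t : ℝ} (ht : 0 ≤ t) :
    exp (-(t / 2)) / (4 * √(1 + t)) ≤ expectedLoss t := by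
  set c := exp (-(t / 2)) / 4 * (√(2 * π))⁻¹
  -- `cosh y ≤ exp (y ^ 2 / 2)` turns the integrand into a Gaussian of variance `1 / (1 + t)`.
  have hpointwise : ∀ z, c * exp (-((1 + t) / 2) * z ^ 2) ≤ lossDensity t z := by
    intro z
    have hcosh : cosh (√t * z) ≤ exp (t * z ^ 2 / 2) := by
      simpa [mul_pow, sq_sqrt ht, mul_div_assoc] using cosh_le_exp_half_sq (√t * z)
    have hsplit : exp (-(z ^ 2 / 2)) = exp (-((1 + t) / 2) * z ^ 2) * exp (t * z ^ 2 / 2) := by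
      rw [← exp_add]; ring_nf
    have hpdf : gaussianPDFReal 0 1 z = (√(2 * π))⁻¹ * exp (-(z ^ 2 / 2)) := by
      simp [gaussianPDFReal, neg_div]
    rw [lossDensity, hpdf, hsplit, div_mul_eq_mul_div, le_div_iff₀ (by positivity)]
    have := mul_le_mul_of_nonneg_left hcosh
      (by positivity : 0 ≤ 4 * c * exp (-((1 + t) / 2) * z ^ 2))
    simp only [c] at this ⊢
    nlinarith [exp_pos (-(t / 2))]
  calc exp (-(t / 2)) / (4 * √(1 + t)) = c * √(π / ((1 + t) / 2)) := by
        rw [show π / ((1 + t) / 2) = 2 * π / (1 + t) by field_simp,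
          sqrt_div (by positivity)]
        have : 0 < √(1 + t) := sqrt_pos.mpr (by linarith)
        have : 0 < √(2 * π) := sqrt_pos.mpr (by positivity)
        simp only [c]
        field_simp
    _ = ∫ z, c * exp (-((1 + t) / 2) * z ^ 2) := by rw [integral_const_mul, integral_gaussian]
    _ ≤ expectedLoss t :=
        integral_mono ((integrable_exp_neg_mul_sq (by positivity)).const_mul c)
          (integrable_lossDensity t) hpointwise

lemma welfare_eq_welfare_one (σ r : ℝ) : welfare σ r = welfare 1 (r / σ ^ 2) := by
  simp only [welfare, one_pow, div_one, mul_div_assoc]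

-- For `t ≤ 0`, `toNNReal` truncates the variance `4 t` to `0`: both Gaussians are Dirac masses.
lemma welfare_one_le_of_nonpos {t : ℝ} (ht : t ≤ 0) : welfare 1 t ≤ -(1 / 4) := by
  have hvar : (4 * t / 1 ^ 2).toNNReal = 0 := Real.toNNReal_of_nonpos (by linarith)
  simp only [welfare, hvar, gaussianReal_zero_var, integral_dirac, Real.exp_neg]
  have hE : exp (2 * t / 1 ^ 2) ≤ 1 := exp_le_one_iff.mpr (by linarith)
  have hEpos := exp_pos (2 * t / 1 ^ 2)
  set E := exp (2 * t / 1 ^ 2)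
  have h1 : E / (1 + E) - 1 = -(1 / (1 + E)) := by field_simp; ring
  have h2 : E⁻¹ / (1 + E⁻¹) = 1 / (1 + E) := by field_simp; ring
  have hhalf : 1 / 2 ≤ 1 / (1 + E) := by
    rw [div_le_div_iff₀ (by norm_num) (by linarith)]; linarith
  rw [h1, h2]
  nlinarith

lemma logistic_mem_Icc (x : ℝ) : exp x / (1 + exp x) ∈ Set.Icc 0 1 :=
  ⟨by positivity, (div_le_one (by positivity)).mpr (by linarith)⟩

/-- The likelihood ratio of `N(2t, 4t)` to `N(-2t, 4t)` at `x` is `exp x`, the posterior odds. -/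
lemma logistic_loss_mul_gaussianPDFReal_add {t : ℝ} (ht : 0 < t) (x : ℝ) :
    gaussianPDFReal (2 * t) (4 * t).toNNReal x * (exp x / (1 + exp x) - 1) ^ 2
      + gaussianPDFReal (-(2 * t)) (4 * t).toNNReal x * (exp x / (1 + exp x)) ^ 2
      = exp (-(t / 2)) / (2 * cosh (x / 2)) * gaussianPDFReal 0 (4 * t).toNNReal x := by
  simp only [gaussianPDFReal, Real.coe_toNNReal _ (by positivity : 0 ≤ 4 * t)]
  have e1 : -(x - 2 * t) ^ 2 / (2 * (4 * t))
      = x / 2 + (-(t / 2) + -(x - 0) ^ 2 / (2 * (4 * t))) := by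
    field_simp; ring
  have e2 : -(x - -(2 * t)) ^ 2 / (2 * (4 * t))
      = -(x / 2) + (-(t / 2) + -(x - 0) ^ 2 / (2 * (4 * t))) := by
    field_simp; ring
  have hx : exp x = exp (x / 2) * exp (x / 2) := by rw [← exp_add]; ring_nf
  rw [e1, e2, exp_add, exp_add, exp_add, exp_add, cosh_eq, hx, Real.exp_neg (x / 2)]
  have := exp_pos (x / 2)
  have : 0 < √(2 * π * (4 * t)) := sqrt_pos.mpr (by positivity)
  field_simp
  ring

lemma integral_sech_mul_gaussianPDFReal {t : ℝ} (ht : 0 < t) :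
    ∫ x, exp (-(t / 2)) / (2 * cosh (x / 2)) * gaussianPDFReal 0 (4 * t).toNNReal x
      = 2 * expectedLoss t := by
  set g := fun x => exp (-(t / 2)) / (2 * cosh (x / 2)) * gaussianPDFReal 0 (4 * t).toNNReal x
  have hc : 0 < 2 * √t := by positivity
  have hpdf : ∀ z, gaussianPDFReal 0 (4 * t).toNNReal (2 * √t * z)
      = (2 * √t)⁻¹ * gaussianPDFReal 0 1 z := by
    intro z
    rw [gaussianPDFReal_mul hc.ne', abs_of_pos (inv_pos.mpr hc), mul_zero]
    congr 2
    apply NNReal.eq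
    rw [NNReal.coe_mul, NNReal.coe_mk, Real.coe_toNNReal _ (by positivity), mul_pow,
      sq_sqrt ht.le, NNReal.coe_one]
    field_simp
    norm_num
  calc ∫ x, g x = 2 * √t * ∫ z, g (2 * √t * z) := by
        rw [Measure.integral_comp_mul_left, smul_eq_mul, abs_of_pos (inv_pos.mpr hc),
          mul_inv_cancel_left₀ hc.ne']
    _ = 2 * expectedLoss t := by
        rw [expectedLoss, ← integral_const_mul, ← integral_const_mul]
        congr 1 with z
        simp only [g, lossDensity]
        rw [hpdf, show 2 * √t * z / 2 = √t * z by ring]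
        have := cosh_pos (√t * z)
        field_simp
        ring

lemma welfare_one_eq_neg_expectedLoss {t : ℝ} (ht : 0 < t) : welfare 1 t = -expectedLoss t := by
  have hvar : (4 * t).toNNReal ≠ 0 := by simpa using ht
  have hintegrable : ∀ (m : ℝ) {g : ℝ → ℝ}, Measurable g → (∀ x, ‖g x‖ ≤ 1) →
      Integrable (fun x => gaussianPDFReal m (4 * t).toNNReal x * g x) := fun m _ hg hg1 =>
    (integrable_gaussianPDFReal _ _).mul_bdd hg.aestronglyMeasurable (ae_of_all _ hg1)
  have hloss₁ : ∀ x, ‖(exp x / (1 + exp x) - 1) ^ 2‖ ≤ 1 := fun x => by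
    obtain ⟨h0, h1⟩ := logistic_mem_Icc x
    rw [norm_pow, Real.norm_eq_abs, sq_abs]
    nlinarith
  have hloss₂ : ∀ x, ‖(exp x / (1 + exp x)) ^ 2‖ ≤ 1 := fun x => by
    obtain ⟨h0, h1⟩ := logistic_mem_Icc x
    rw [norm_pow, Real.norm_eq_abs, sq_abs]
    nlinarith
  have hsum := integral_sech_mul_gaussianPDFReal ht
  rw [← integral_congr_ae (ae_of_all _ (logistic_loss_mul_gaussianPDFReal_add ht)),
    integral_add (hintegrable _ (by fun_prop) hloss₁) (hintegrable _ (by fun_prop) hloss₂)] at hsum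
  simp only [welfare, one_pow, div_one, integral_gaussianReal_eq_integral_smul hvar, smul_eq_mul]
  linarith

lemma exists_threshold_of_monotoneOn {u : ℝ → ℝ} {c : ℝ} (hmono : MonotoneOn u (Set.Ioi 0))
    (hnonpos : ∀ t ≤ 0, u t < c) (hlow : ∃ t > 0, u t < c) (hhigh : ∃ t, c ≤ u t) :
    ∃ τ > 0, ∀ t, (t < τ → u t < c) ∧ (τ < t → c ≤ u t) := by
  obtain ⟨t₁, ht₁, hut₁⟩ := hlow
  obtain ⟨t₂, hut₂⟩ := hhigh
  have ht₂ : 0 < t₂ := by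
    by_contra! h
    exact (hnonpos t₂ h).not_ge hut₂
  have hbdd : BddAbove {t | u t < c} := ⟨t₂, fun s hs => by
    by_contra! h
    exact (hmono ht₂ (ht₂.trans h) h.le).not_gt (hs.trans_le hut₂)⟩
  refine ⟨sSup {t | u t < c}, ht₁.trans_le (le_csSup hbdd hut₁),
    fun t => ⟨fun ht => ?_, fun ht => ?_⟩⟩
  · obtain ⟨s, hs, hts⟩ := exists_lt_of_lt_csSup ⟨t₁, hut₁⟩ ht
    rcases le_or_gt t 0 with h | h
    · exact hnonpos t h
    · exact (hmono h (h.trans hts) hts.le).trans_lt hs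
  · by_contra! h
    exact ht.not_ge (le_csSup hbdd h)

lemma exists_pos_welfare_one_lt {c : ℝ} (hc : -(1 / 4) < c) : ∃ t > 0, welfare 1 t < c := by
  have hlim : Tendsto (fun t => exp (-(t / 2)) / (4 * √(1 + t))) (𝓝[>] 0) (𝓝 (1 / 4)) := by
    have : ContinuousAt (fun t => exp (-(t / 2)) / (4 * √(1 + t))) 0 := by
      fun_prop (disch := norm_num)
    simpa using this.tendsto.mono_left nhdsWithin_le_nhds
  obtain ⟨t, hlt, ht⟩ := ((hlim.eventually (lt_mem_nhds (neg_lt.mp hc))).and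
    self_mem_nhdsWithin).exists
  refine ⟨t, ht, ?_⟩
  rw [welfare_one_eq_neg_expectedLoss ht]
  linarith [le_expectedLoss (Set.mem_Ioi.mp ht).le]

lemma exists_le_welfare_one {c : ℝ} (hc1 : -(1 / 4) < c) (hc2 : c < 0) :
    ∃ t, c ≤ welfare 1 t := by
  have hlog : log (-(4 * c)) < 0 := log_neg (by linarith) (by linarith)
  refine ⟨-2 * log (-(4 * c)), ?_⟩
  rw [welfare_one_eq_neg_expectedLoss (by linarith)]
  have := expectedLoss_le (-2 * log (-(4 * c)))
  rw [show -(-2 * log (-(4 * c)) / 2) = log (-(4 * c)) by ring, exp_log (by linarith)] at this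
  linarith

lemma exists_welfare_threshold {c : ℝ} (hc1 : -(1 / 4) < c) (hc2 : c < 0) :
    ∃ τ > 0, ∀ σ r : ℝ, σ ≠ 0 →
      (r < τ * σ ^ 2 → welfare σ r < c) ∧ (τ * σ ^ 2 < r → c ≤ welfare σ r) := by
  have hmono : MonotoneOn (welfare 1) (Set.Ioi 0) := fun s hs t ht hst => by
    rw [welfare_one_eq_neg_expectedLoss hs, welfare_one_eq_neg_expectedLoss ht, neg_le_neg_iff]
    exact antitoneOn_expectedLoss (Set.mem_Ici.mpr hs.out.le) (Set.mem_Ici.mpr ht.out.le) hst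
  obtain ⟨τ, hτ, hthreshold⟩ := exists_threshold_of_monotoneOn hmono
    (fun t ht => (welfare_one_le_of_nonpos ht).trans_lt hc1) (exists_pos_welfare_one_lt hc1)
    (exists_le_welfare_one hc1 hc2)
  refine ⟨τ, hτ, fun σ r hσ => ?_⟩
  have hσ2 : 0 < σ ^ 2 := by positivity
  rw [welfare_eq_welfare_one, ← div_lt_iff₀ hσ2, ← lt_div_iff₀ hσ2]
  exact hthreshold _

lemma exists_le_mul_add_of_tendsto_div {f : ℕ → ℝ} {L B : ℝ}
    (hf : Tendsto (fun i : ℕ => f i / i) atTop (𝓝 L)) (hLB : L < B) :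
    ∃ C, ∀ i, f i ≤ B * i + C := by
  have hev : ∀ᶠ i : ℕ in atTop, f i - B * i ≤ 0 := by
    filter_upwards [hf.eventually (eventually_lt_nhds hLB), eventually_gt_atTop 0] with i hi hi0
    rw [div_lt_iff₀ (Nat.cast_pos.mpr hi0)] at hi
    linarith
  obtain ⟨C, hC⟩ := (isBoundedUnder_of_eventually_le hev).bddAbove_range
  exact ⟨C, fun i => by linarith [hC (Set.mem_range_self i)]⟩

lemma exists_mul_sub_le_of_tendsto_div {f : ℕ → ℝ} {L A : ℝ}
    (hf : Tendsto (fun i : ℕ => f i / i) atTop (𝓝 L)) (hAL : A < L) :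
    ∃ C, ∀ i, A * i - C ≤ f i := by
  have hneg : Tendsto (fun i : ℕ => -f i / i) atTop (𝓝 (-L)) := by
    simpa only [neg_div] using hf.neg
  obtain ⟨C, hC⟩ := exists_le_mul_add_of_tendsto_div hneg (neg_lt_neg hAL)
  exact ⟨C, fun i => by linarith [hC i]⟩

lemma eventually_exists_index_separating {r r' : ℕ → ℝ} {L L' : ℝ}
    (hL : Tendsto (fun i : ℕ => r i / i) atTop (𝓝 L))
    (hL' : Tendsto (fun i : ℕ => r' i / i) atTop (𝓝 L')) (hrank : L' < L) (hL0 : 0 < L) :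
    ∀ᶠ R in atTop, ∃ I : ℕ, (∀ i, I ≤ i → R < r i) ∧ ∀ i, i ≤ I → r' i < R := by
  obtain ⟨B, hB, hBL⟩ := exists_between (max_lt hrank hL0)
  obtain ⟨A, hBA, hAL⟩ := exists_between hBL
  have hB0 : 0 < B := (le_max_right _ _).trans_lt hB
  have hA0 : 0 < A := hB0.trans hBA
  obtain ⟨C', hC'⟩ := exists_le_mul_add_of_tendsto_div hL' ((le_max_left _ _).trans_lt hB)
  obtain ⟨C, hC⟩ := exists_mul_sub_le_of_tendsto_div hL hAL
  have hgap : Tendsto (fun R => (1 - B / A) * R - (B * C / A + B + C')) atTop atTop :=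
    tendsto_atTop_add_const_right _ _
      (tendsto_id.const_mul_atTop (by rw [sub_pos, div_lt_one hA0]; exact hBA))
  filter_upwards [hgap.eventually_gt_atTop 0, eventually_ge_atTop (-C)] with R hR hRC
  -- `I` is the first index at which the lower bound `A * i - C` on `r i` exceeds `R`.
  set x := (R + C) / A
  have hx : 0 ≤ x := div_nonneg (by linarith) hA0.le
  refine ⟨⌊x⌋₊ + 1, fun i hi => ?_, fun i hi => ?_⟩
  · have hxi : x < i := (Nat.lt_floor_add_one x).trans_le (by exact_mod_cast hi)
    have : R + C < A * i := by rwa [div_lt_iff₀' hA0] at hxi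
    linarith [hC i]
  · have hix : (i : ℝ) ≤ x + 1 :=
      (Nat.cast_le.mpr hi).trans (by push_cast; linarith [Nat.floor_le hx])
    have : B * (x + 1) = B / A * R + B * C / A + B := by simp only [x]; field_simp
    nlinarith [hC' i]

theorem strong_attainment_before_weak_general
    (Net Net' : ℕ → Finset ℕ)
    (L L' : ℝ)
    (hL : Tendsto (fun i : ℕ => rcount Net i / (i : ℝ)) atTop (nhds L))
    (hL' : Tendsto (fun i : ℕ => rcount Net' i / (i : ℝ)) atTop (nhds L'))
    (hrank : L' < L) (hpos : 0 < L')
    (vbar : ℝ) (hv1 : -(1 / 4) < vbar) (hv2 : vbar < 0) :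
    ∃ pi0 : ℝ, 0 < pi0 ∧ ∀ σ : ℝ, 0 < σ → 1 / σ ^ 2 ≤ pi0 →
      ∃ I i' : ℕ,
        IsLeast {I : ℕ | ∀ i : ℕ, I ≤ i → vbar ≤ welfare σ (rcount Net i)} I ∧
        IsLeast {i : ℕ | vbar ≤ welfare σ (rcount Net' i)} i' ∧
        I < i' := by
  obtain ⟨τ, hτ, hwelfare⟩ := exists_welfare_threshold hv1 hv2
  obtain ⟨D, hD⟩ :=
    (eventually_exists_index_separating hL hL' hrank (hpos.trans hrank)).exists_forall_of_atTop
  have hr' : Tendsto (rcount Net') atTop atTop := tendsto_natCast_atTop_atTop.num hpos hL'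
  refine ⟨τ / max D 1, by positivity, fun σ hσ hσπ => ?_⟩
  have hDR : D ≤ τ * σ ^ 2 := by
    rw [div_le_div_iff₀ (by positivity) (by positivity)] at hσπ
    linarith [le_max_left D 1]
  obtain ⟨I₀, hr_gt, hr'_lt⟩ := hD _ hDR
  obtain ⟨j, hj⟩ := (hr'.eventually_gt_atTop (τ * σ ^ 2)).exists
  have hstrong : I₀ ∈ {I : ℕ | ∀ i : ℕ, I ≤ i → vbar ≤ welfare σ (rcount Net i)} :=
    fun i hi => (hwelfare σ _ hσ.ne').2 (hr_gt i hi)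
  have hweak : j ∈ {i : ℕ | vbar ≤ welfare σ (rcount Net' i)} := (hwelfare σ _ hσ.ne').2 hj
  refine ⟨_, _, isLeast_csInf ⟨I₀, hstrong⟩, isLeast_csInf ⟨j, hweak⟩, ?_⟩
  calc sInf _ ≤ I₀ := Nat.sInf_le hstrong
    _ < sInf {i : ℕ | vbar ≤ welfare σ (rcount Net' i)} := by
      by_contra! h
      exact ((hwelfare σ _ hσ.ne').1 (hr'_lt _ h)).not_ge (Nat.sInf_mem ⟨j, hweak⟩)

/-- Let `M` and `M′` be networks whose signal counts satisfy
`lim r_i/i > lim r′_i/i > 0`. Then for every utility threshold `v̄ ∈ (−1/4, 0)`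
there is `π > 0` such that whenever the private signal precision satisfies
`0 < 1/σ² ≤ π`: social learning strongly attains `v̄` by some agent `I` in `M`,
weakly attains `v̄` by some agent `i′` in `M′`, and `I < i′`. -/
theorem strong_attainment_before_weak
    (Net Net' : ℕ → Finset ℕ)
    (hNet : ∀ i, ∀ j ∈ Net i, 1 ≤ j ∧ j < i)
    (hNet' : ∀ i, ∀ j ∈ Net' i, 1 ≤ j ∧ j < i)
    (L L' : ℝ)
    (hL : Tendsto (fun i : ℕ => rcount Net i / (i : ℝ)) atTop (nhds L))
    (hL' : Tendsto (fun i : ℕ => rcount Net' i / (i : ℝ)) atTop (nhds L'))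
    (hrank : L' < L) (hpos : 0 < L')
    (vbar : ℝ) (hv1 : -(1 / 4) < vbar) (hv2 : vbar < 0) :
    ∃ pi0 : ℝ, 0 < pi0 ∧ ∀ σ : ℝ, 0 < σ → 1 / σ ^ 2 ≤ pi0 →
      ∃ I i' : ℕ,
        IsLeast {I : ℕ | ∀ i : ℕ, I ≤ i → vbar ≤ welfare σ (rcount Net i)} I ∧
        IsLeast {i : ℕ | vbar ≤ welfare σ (rcount Net' i)} i' ∧
        I < i' :=
  strong_attainment_before_weak_general Net Net' L L' hL hL' hrank hpos vbar hv1 hv2
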